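/- arXiv:2405.04358 — 5 statements merged into one kernel-verified Lean document; each statement's English description precedes it below -/
import Mathlib

section
/- For all N ≥ 1 and 1 ≤ r ≤ N, the sum over r of H_N^{(r)} equals 1, where H_N^{(r)} = C(N+r-2, N-1) C(2N-1-r, N-1) / C(3N-2, N-1). -/
open Finset

lemma vand (m p n : ℕ) :
    ∑ k ∈ Finset.range (n + 1), (m + k).choose k * (p + (n - k)).choose (n - k)
      = (m + p + n + 1).choose n := by
  induction p generalizing n with
  | zero =>
    have h : ∀ k ∈ Finset.range (n + 1),
        (m + k).choose k * (0 + (n - k)).choose (n - k) = (k + m).choose m := by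
      intro k _
      rw [Nat.zero_add, Nat.choose_self, Nat.mul_one, Nat.add_comm m k, Nat.choose_symm_add]
    rw [Finset.sum_congr rfl h, Nat.sum_range_add_choose]
    have hs := Nat.choose_symm (show m + 1 ≤ n + m + 1 by omega)
    simp only [show n + m + 1 - (m + 1) = n from by omega] at hs
    rw [show m + 0 + n + 1 = n + m + 1 from by omega, ← hs]
  | succ p ih =>
    induction n with
    | zero => simp
    | succ n ihn =>
      have step : ∀ k ∈ Finset.range (n + 1),
          (m + k).choose k * (p + 1 + (n + 1 - k)).choose (n + 1 - k)
          = (m + k).choose k * (p + 1 + (n - k)).choose (n - k)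
            + (m + k).choose k * (p + (n + 1 - k)).choose (n + 1 - k) := by
        intro k hk
        rw [Finset.mem_range] at hk
        have h1 : n + 1 - k = (n - k) + 1 := by omega
        rw [h1, show p + ((n - k) + 1) = p + 1 + (n - k) from by omega,
          show p + 1 + ((n - k) + 1) = (p + 1 + (n - k)) + 1 from by omega,
          Nat.choose_succ_succ', Nat.mul_add]
      have hB : (∑ k ∈ Finset.range (n + 1),
            (m + k).choose k * (p + (n + 1 - k)).choose (n + 1 - k))
          + (m + (n + 1)).choose (n + 1)
          = (m + p + (n + 1) + 1).choose (n + 1) := by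
        have h := ih (n + 1)
        rw [Finset.sum_range_succ] at h
        simpa using h
      rw [Finset.sum_range_succ, Finset.sum_congr rfl step, Finset.sum_add_distrib, ihn]
      simp only [Nat.sub_self, Nat.add_zero, Nat.choose_zero_right, Nat.mul_one]
      rw [add_assoc, hB, show m + (p + 1) + n + 1 = m + p + n + 2 from by omega,
        show m + p + (n + 1) + 1 = m + p + n + 2 from by omega,
        show m + (p + 1) + (n + 1) + 1 = (m + p + n + 2) + 1 from by omega]
      exact (Nat.choose_succ_succ' (m + p + n + 2) n).symm

theorem refined_asm_sum_to_one (N : ℕ) (hN : 1 ≤ N) :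
    ∑ r ∈ Finset.Icc 1 N,
      ((Nat.choose (N + r - 2) (N - 1) : ℚ) * (Nat.choose (2 * N - 1 - r) (N - 1) : ℚ)) /
        (Nat.choose (3 * N - 2) (N - 1) : ℚ) = 1 := by
  obtain ⟨n, rfl⟩ : ∃ n, N = n + 1 := ⟨N - 1, by omega⟩
  have key : ∑ r ∈ Finset.Icc 1 (n + 1),
      ((n + 1) + r - 2).choose ((n + 1) - 1) * (2 * (n + 1) - 1 - r).choose ((n + 1) - 1)
      = (3 * (n + 1) - 2).choose ((n + 1) - 1) := by
    rw [← Finset.Ico_add_one_right_eq_Icc, Finset.sum_Ico_eq_sum_range]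
    simp only [Nat.add_sub_cancel, show (n + 1 + 1) - 1 = n + 1 from by omega,
      show Nat.succ (n + 1) - 1 = n + 1 from by omega]
    rw [show 3 * (n + 1) - 2 = n + n + n + 1 from by omega, ← vand n n n]
    apply Finset.sum_congr rfl
    intro k hk
    rw [Finset.mem_range] at hk
    congr 1
    · rw [show n + 1 + (1 + k) - 2 = n + k from by omega, Nat.add_comm n k,
        Nat.choose_symm_add]
    · rw [show 2 * (n + 1) - 1 - (1 + k) = 2 * n - k from by omega,
        show n + (n - k) = 2 * n - k from by omega]
      have hs := Nat.choose_symm (show n ≤ 2 * n - k by omega)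
      rw [show 2 * n - k - n = n - k from by omega] at hs
      exact hs.symm
  have hD : (0 : ℚ) < ((3 * (n + 1) - 2).choose ((n + 1) - 1) : ℚ) := by
    exact_mod_cast Nat.choose_pos (by omega)
  rw [← Finset.sum_div, div_eq_one_iff_eq (ne_of_gt hD)]
  exact_mod_cast key
end

section
/- For N ≥ 1, the generating function h_N(z) = ∑_{r=1}^N H_N^{(r)} z^{r-1}, with H_N^{(r)} = C(N+r-2,N-1) C(2N-1-r,N-1) / C(3N-2,N-1), equals the Gauss hypergeometric function ₂F₁(-N+1, N; 2N; 1-z). -/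
open Finset Nat

/-- Hockey-stick over `range`. -/
private lemma hs_sum (a m : ℕ) : ∑ j ∈ range (m+1), j.choose a = (m+1).choose (a+1) := by
  rcases le_or_gt a m with h | h
  · rw [← Nat.sum_Icc_choose]
    refine (Finset.sum_subset ?_ ?_).symm
    · intro x hx
      simp only [mem_Icc] at hx
      simp only [mem_range]; omega
    · intro x hx hx'
      simp only [mem_range] at hx
      simp only [mem_Icc, not_and, not_le] at hx'
      exact Nat.choose_eq_zero_of_lt (by omega)
  · rw [Nat.choose_eq_zero_of_lt (by omega)]
    apply Finset.sum_eq_zero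
    intro x hx
    simp only [mem_range] at hx
    exact Nat.choose_eq_zero_of_lt (by omega)

/-- Vandermonde-type convolution: `∑_{j=0}^n C(j,a) C(n-j,c) = C(n+1, a+c+1)`. -/
private lemma vand_s2 (a : ℕ) : ∀ n c : ℕ,
    ∑ j ∈ range (n+1), j.choose a * (n-j).choose c = (n+1).choose (a+c+1) := by
  intro n
  induction n with
  | zero =>
    intro c
    rw [Finset.sum_range_one]
    cases a with
    | zero =>
      cases c with
      | zero => simp
      | succ c =>
        rw [Nat.choose_eq_zero_of_lt (show 1 < 0+(c+1)+1 by omega)]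
        simp
    | succ a =>
      rw [Nat.choose_eq_zero_of_lt (show 1 < (a+1)+c+1 by omega)]
      simp
  | succ n ih =>
    intro c
    cases c with
    | zero =>
      simp only [Nat.choose_zero_right, mul_one]
      simpa using hs_sum a (n+1)
    | succ c =>
      rw [Finset.sum_range_succ]
      have h1 : ∀ j ∈ range (n+1), j.choose a * ((n+1)-j).choose (c+1)
          = j.choose a * (n-j).choose c + j.choose a * (n-j).choose (c+1) := by
        intro j hj
        simp only [mem_range] at hj
        have hnj : n + 1 - j = (n - j) + 1 := by omega
        rw [hnj, Nat.choose_succ_succ, Nat.mul_add]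
      rw [Finset.sum_congr rfl h1, Finset.sum_add_distrib, ih c, ih (c+1),
        Nat.sub_self, Nat.choose_zero_succ, Nat.mul_zero, Nat.add_zero]
      exact (Nat.choose_succ_succ' (n+1) (a+c+1)).symm

private lemma qfact_ne (n : ℕ) : ((n ! : ℕ) : ℚ) ≠ 0 :=
  Nat.cast_ne_zero.2 (Nat.factorial_ne_zero n)

/-- Trinomial/subset-of-subset identity. -/
private lemma trinom (M s k : ℕ) :
    (M+s).choose M * s.choose k = (M+k).choose k * (M+s).choose (M+k) := by
  rcases le_or_gt k s with h | h
  · rw [← Nat.cast_inj (R := ℚ)]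
    push_cast
    rw [Nat.cast_choose ℚ (by omega : M ≤ M + s),
      Nat.cast_choose ℚ h,
      Nat.cast_choose ℚ (by omega : k ≤ M + k),
      Nat.cast_choose ℚ (by omega : M + k ≤ M + s)]
    have e1 : M + s - M = s := by omega
    have e2 : s - k = s - k := rfl
    have e3 : M + k - k = M := by omega
    have e4 : M + s - (M + k) = s - k := by omega
    rw [e1, e3, e4]
    field_simp [qfact_ne]
  · rw [Nat.choose_eq_zero_of_lt h, Nat.choose_eq_zero_of_lt (by omega : M + s < M + k)]
    simp

/-- The key combinatorial identity. -/
private lemma keyNat (M k : ℕ) (hk : k ≤ M) :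
    ∑ s ∈ range (M+1), (M+s).choose M * ((2*M - s).choose M * s.choose k)
      = (M+k).choose k * (3*M+1).choose (M-k) := by
  have step1 : ∀ s ∈ range (M+1),
      (M+s).choose M * ((2*M - s).choose M * s.choose k)
        = (M+k).choose k * ((M+s).choose (M+k) * (2*M - s).choose M) := by
    intro s _
    have := trinom M s k
    calc (M+s).choose M * ((2*M - s).choose M * s.choose k)
        = ((M+s).choose M * s.choose k) * (2*M - s).choose M := by ring
      _ = ((M+k).choose k * (M+s).choose (M+k)) * (2*M - s).choose M := by rw [this]
      _ = (M+k).choose k * ((M+s).choose (M+k) * (2*M - s).choose M) := by ring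
  rw [Finset.sum_congr rfl step1, ← Finset.mul_sum]
  have step2 : ∑ s ∈ range (M+1), (M+s).choose (M+k) * (2*M - s).choose M
      = ∑ j ∈ range (3*M+1), j.choose (M+k) * (3*M - j).choose M := by
    have hsub : Ico M (2*M+1) ⊆ range (3*M+1) := by
      intro x hx; simp only [mem_Ico] at hx; simp only [mem_range]; omega
    have hz : ∀ j ∈ range (3*M+1), j ∉ Ico M (2*M+1) →
        j.choose (M+k) * (3*M - j).choose M = 0 := by
      intro j hj hj'
      simp only [mem_range] at hj
      simp only [mem_Ico, not_and, not_lt] at hj'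
      rcases lt_or_ge j M with h | h
      · rw [Nat.choose_eq_zero_of_lt (by omega)]; ring
      · have : 2*M + 1 ≤ j := hj' h
        rw [Nat.choose_eq_zero_of_lt (show 3*M - j < M by omega)]; ring
    rw [← Finset.sum_subset hsub hz, Finset.sum_Ico_eq_sum_range]
    have : 2*M+1 - M = M+1 := by omega
    rw [this]
    refine Finset.sum_congr rfl ?_
    intro s hs
    have e : 3*M - (M + s) = 2*M - s := by omega
    rw [e]
  rw [step2, vand_s2 (M+k) (3*M) M,
    Nat.choose_symm_of_eq_add (show 3*M+1 = (M+k+M+1) + (M-k) by omega)]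

/-- The coefficient identity in `ℚ`. -/
private lemma coeff_eq (M k : ℕ) (hk : k ≤ M) :
    ((∑ s ∈ range (M+1), (M+s).choose M * ((2*M - s).choose M * s.choose k) : ℕ) : ℚ)
        / ((3*M+1).choose M : ℚ)
      = (M.descFactorial k : ℚ) * ((M+1).ascFactorial k : ℚ)
        / (((2*M+2).ascFactorial k : ℚ) * (k ! : ℚ)) := by
  rw [keyNat M k hk]
  have hasc1 : ((M+1).ascFactorial k : ℚ) = ((M+k)! : ℚ) / (M ! : ℚ) := by
    rw [eq_div_iff (qfact_ne M)]
    rw_mod_cast [mul_comm, Nat.factorial_mul_ascFactorial]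
  have hasc2 : ((2*M+2).ascFactorial k : ℚ) = ((2*M+1+k)! : ℚ) / ((2*M+1)! : ℚ) := by
    rw [eq_div_iff (qfact_ne (2*M+1))]
    have := Nat.factorial_mul_ascFactorial (2*M+1) k
    rw [show 2*M+1+1 = 2*M+2 by omega] at this
    rw [mul_comm]
    exact_mod_cast this
  have hdesc : (M.descFactorial k : ℚ) = (M ! : ℚ) / ((M-k)! : ℚ) := by
    rw [eq_div_iff (qfact_ne (M-k))]
    rw_mod_cast [mul_comm, Nat.factorial_mul_descFactorial hk]
  push_cast
  rw [hasc1, hasc2, hdesc,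
    Nat.cast_choose ℚ (show k ≤ M + k by omega),
    Nat.cast_choose ℚ (show M - k ≤ 3*M+1 by omega),
    Nat.cast_choose ℚ (show M ≤ 3*M+1 by omega),
    show M + k - k = M by omega,
    show 3*M+1 - (M-k) = 2*M+1+k by omega,
    show 3*M+1 - M = 2*M+1 by omega]
  field_simp [qfact_ne]

theorem hN_eq_gauss_2F1 (N : ℕ) (hN : 1 ≤ N) (z : ℚ) :
    ∑ r ∈ Finset.Icc 1 N,
      (((Nat.choose (N + r - 2) (N - 1) : ℚ) * (Nat.choose (2 * N - 1 - r) (N - 1) : ℚ)) /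
        (Nat.choose (3 * N - 2) (N - 1) : ℚ)) * z ^ (r - 1) =
    ∑ k ∈ Finset.range N,
      ((ascPochhammer ℚ k).eval (1 - (N : ℚ)) * (ascPochhammer ℚ k).eval (N : ℚ) /
        ((ascPochhammer ℚ k).eval (2 * (N : ℚ)) * (k.factorial : ℚ))) * (1 - z) ^ k := by
  obtain ⟨M, rfl⟩ : ∃ M, N = M + 1 := ⟨N - 1, by omega⟩
  -- Rewrite the left-hand side as a sum over `range (M+1)`.
  have hL : ∑ r ∈ Finset.Icc 1 (M+1),
      (((Nat.choose (M+1 + r - 2) (M+1 - 1) : ℚ) * (Nat.choose (2 * (M+1) - 1 - r) (M+1-1) : ℚ)) /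
        (Nat.choose (3 * (M+1) - 2) (M+1-1) : ℚ)) * z ^ (r - 1)
      = ∑ s ∈ range (M+1),
        (((M+s).choose M : ℚ) * ((2*M - s).choose M : ℚ) / ((3*M+1).choose M : ℚ)) * z ^ s := by
    rw [← Finset.Ico_add_one_right_eq_Icc, Finset.sum_Ico_eq_sum_range,
      show M + 1 + 1 - 1 = M + 1 by omega]
    refine Finset.sum_congr rfl ?_
    intro s hs
    rw [show M+1+(1+s)-2 = M+s by omega, show 2*(M+1)-1-(1+s) = 2*M-s by omega,
      show 3*(M+1)-2 = 3*M+1 by omega, show M+1-1 = M by omega, show 1+s-1 = s by omega]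
  rw [hL]
  -- Simplify the Pochhammer coefficients on the right-hand side.
  have hR : ∀ k : ℕ,
      ((ascPochhammer ℚ k).eval (1 - ((M+1 : ℕ) : ℚ)) * (ascPochhammer ℚ k).eval ((M+1 : ℕ) : ℚ) /
        ((ascPochhammer ℚ k).eval (2 * ((M+1 : ℕ) : ℚ)) * (k ! : ℚ)))
      = (-1)^k * ((M.descFactorial k : ℚ) * ((M+1).ascFactorial k : ℚ)
          / (((2*M+2).ascFactorial k : ℚ) * (k ! : ℚ))) := by
    intro k
    have e1 : (1 : ℚ) - ((M+1 : ℕ) : ℚ) = -(M : ℚ) := by push_cast; ring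
    have e2 : (2 : ℚ) * ((M+1 : ℕ) : ℚ) = ((2*M+2 : ℕ) : ℚ) := by push_cast; ring
    rw [e1, e2, ascPochhammer_eval_neg_eq_descPochhammer,
      descPochhammer_eval_eq_descFactorial, ← Nat.cast_ascFactorial, ← Nat.cast_ascFactorial]
    ring
  -- Expand powers of `z` in terms of powers of `z - 1`.
  have hzpow : ∀ s ∈ range (M+1), (z : ℚ) ^ s
      = ∑ k ∈ range (M+1), (z - 1) ^ k * (s.choose k : ℚ) := by
    intro s hs
    simp only [mem_range] at hs
    have h1 : z ^ s = ((z - 1) + 1) ^ s := by ring_nf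
    rw [h1, add_pow]
    simp only [one_pow, mul_one]
    refine Finset.sum_subset (by intro x hx; simp only [mem_range] at *; omega) ?_
    intro k hk hk'
    simp only [mem_range] at hk hk'
    rw [Nat.choose_eq_zero_of_lt (by omega)]
    simp
  calc ∑ s ∈ range (M+1),
        (((M+s).choose M : ℚ) * ((2*M - s).choose M : ℚ) / ((3*M+1).choose M : ℚ)) * z ^ s
      = ∑ s ∈ range (M+1), ∑ k ∈ range (M+1),
          (((M+s).choose M : ℚ) * ((2*M - s).choose M : ℚ) / ((3*M+1).choose M : ℚ))
            * ((z - 1) ^ k * (s.choose k : ℚ)) := by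
        refine Finset.sum_congr rfl ?_
        intro s hs
        rw [hzpow s hs, Finset.mul_sum]
    _ = ∑ k ∈ range (M+1), ∑ s ∈ range (M+1),
          (((M+s).choose M : ℚ) * ((2*M - s).choose M : ℚ) / ((3*M+1).choose M : ℚ))
            * ((z - 1) ^ k * (s.choose k : ℚ)) := Finset.sum_comm
    _ = ∑ k ∈ range (M+1),
          ((-1)^k * ((M.descFactorial k : ℚ) * ((M+1).ascFactorial k : ℚ)
            / (((2*M+2).ascFactorial k : ℚ) * (k ! : ℚ)))) * (1 - z) ^ k := by
        refine Finset.sum_congr rfl ?_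
        intro k hk
        simp only [mem_range] at hk
        have hfac : ∑ s ∈ range (M+1),
            (((M+s).choose M : ℚ) * ((2*M - s).choose M : ℚ) / ((3*M+1).choose M : ℚ))
              * ((z - 1) ^ k * (s.choose k : ℚ))
            = (z - 1) ^ k * (((∑ s ∈ range (M+1),
                (M+s).choose M * ((2*M - s).choose M * s.choose k) : ℕ) : ℚ)
                  / ((3*M+1).choose M : ℚ)) := by
          rw [Nat.cast_sum, Finset.sum_div, Finset.mul_sum]
          refine Finset.sum_congr rfl ?_
          intro s _
          push_cast
          ring
        rw [hfac, coeff_eq M k (by omega)]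
        have : (z - 1) ^ k = (-1)^k * (1 - z)^k := by
          rw [show z - 1 = (-1) * (1 - z) by ring, mul_pow]
        rw [this]
        ring
    _ = ∑ k ∈ range (M+1),
          ((ascPochhammer ℚ k).eval (1 - ((M+1 : ℕ) : ℚ)) * (ascPochhammer ℚ k).eval ((M+1 : ℕ) : ℚ) /
            ((ascPochhammer ℚ k).eval (2 * ((M+1 : ℕ) : ℚ)) * (k ! : ℚ))) * (1 - z) ^ k := by
        refine Finset.sum_congr rfl ?_
        intro k _
        rw [hR k]
end

section
/- For N ≥ 1, the terminating hypergeometric identity ₂F₁(-N+1, N; 2N; 1-z) = [(N)_{N-1} / (2N)_{N-1}] · ₂F₁(-N+1, N; -2N+2; z) holds as an identity of polynomials in z, where (a)_k denotes the Pochhammer symbol. -/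
/-!
This is the case `n = N - 1`, `b = N`, `c = 2N` of the general transformation
`₂F₁(-n, b; c; 1 - z) = (c - b)_n / (c)_n · ₂F₁(-n, b; 1 + b - c - n; z)`.
Expanding each `(1 - z)^k` binomially, the coefficient of `z^j` on the left becomes a multiple
of `₂F₁(-(n - j), b + j; c + j; 1)`, which Chu–Vandermonde evaluates as
`(c - b)_{n-j} / (c + j)_{n-j}`; matching it with the coefficient on the right is the reflection
`(1 + b - c - n)_j = (-1)^j (c - b + n - j)_j`. Chu–Vandermonde in the form
`₂F₁(-M, B; C; 1) = (C - B)_M / (C)_M` is Vandermonde's identity for falling factorials,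
evaluated at `-B` and `C + M - 1`.
-/

open Finset Polynomial Nat

section Pochhammer

variable {R : Type*} [CommRing R]

theorem ascPochhammer_eval_add {S : Type*} [CommSemiring S] (m n : ℕ) (x : S) :
    (ascPochhammer S (m + n)).eval x =
      (ascPochhammer S m).eval x * (ascPochhammer S n).eval (x + m) := by
  rw [← ascPochhammer_mul, eval_mul, eval_comp]
  simp

theorem ascPochhammer_eval_neg (x : R) (k : ℕ) :
    (ascPochhammer R k).eval (-x) = (-1) ^ k * (ascPochhammer R k).eval (x - k + 1) := by
  rw [ascPochhammer_eval_neg_eq_descPochhammer, descPochhammer_eval_eq_ascPochhammer]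

theorem descPochhammer_eval_neg (x : R) (k : ℕ) :
    (descPochhammer R k).eval (-x) = (-1) ^ k * (ascPochhammer R k).eval x := by
  rw [← neg_neg x, ascPochhammer_eval_neg_eq_descPochhammer, neg_neg, ← mul_assoc, ← mul_pow]
  simp

theorem ascPochhammer_eval_neg_natCast (n k : ℕ) :
    (ascPochhammer R k).eval (-n : R) = (-1) ^ k * k ! * n.choose k := by
  rw [ascPochhammer_eval_neg_eq_descPochhammer, descPochhammer_eval_eq_descFactorial,
    Nat.descFactorial_eq_factorial_mul_choose]
  push_cast
  ring

theorem ascPochhammer_eval_neg_natCast_ne_zero {K : Type*} [Field K] [CharZero K] {n k : ℕ}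
    (hk : k ≤ n) : (ascPochhammer K k).eval (-n : K) ≠ 0 := by
  rw [ascPochhammer_eval_neg_natCast]
  simp [k.factorial_ne_zero, (Nat.choose_pos hk).ne']

theorem descPochhammer_eval_add (x y : R) (k : ℕ) :
    (descPochhammer R k).eval (x + y) = ∑ ij ∈ antidiagonal k,
      k.choose ij.1 * ((descPochhammer R ij.1).eval x * (descPochhammer R ij.2).eval y) := by
  have h (n : ℕ) (t : R) : (descPochhammer R n).eval t = (descPochhammer ℤ n).smeval t := by
    rw [← descPochhammer_map (Int.castRingHom R), eval_map, ← eval₂_smulOneHom_eq_smeval,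
      RingHom.ext_int (Int.castRingHom R) (RingHom.smulOneHom)]
  simp only [h]
  exact Ring.descPochhammer_smeval_add k (Commute.all x y)

theorem ascPochhammer_eval_sub_eq_sum (M : ℕ) (B C : R) :
    (ascPochhammer R M).eval (C - B) = ∑ m ∈ range (M + 1),
      (-1) ^ m * M.choose m * (ascPochhammer R m).eval B *
        (ascPochhammer R (M - m)).eval (C + m) := by
  calc (ascPochhammer R M).eval (C - B)
      = (descPochhammer R M).eval (-B + (C + M - 1)) := by
        rw [descPochhammer_eval_eq_ascPochhammer]
        ring_nf
    _ = ∑ m ∈ range (M + 1), M.choose m *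
          ((descPochhammer R m).eval (-B) * (descPochhammer R (M - m)).eval (C + M - 1)) := by
        rw [descPochhammer_eval_add, Nat.sum_antidiagonal_eq_sum_range_succ_mk]
    _ = _ := by
        refine sum_congr rfl fun m hm => ?_
        rw [descPochhammer_eval_neg, descPochhammer_eval_eq_ascPochhammer,
          Nat.cast_sub (Nat.lt_succ_iff.mp (mem_range.mp hm))]
        ring_nf

end Pochhammer

section Hypergeometric

variable {K : Type*} [Field K]

/-- `₂F₁(-n, b; c; z)`, a polynomial in `z` of degree at most `n`. -/
noncomputable def terminatingHypergeometric (n : ℕ) (b c z : K) : K :=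
  ∑ k ∈ range (n + 1), ordinaryHypergeometricCoefficient (-n : K) b c k * z ^ k

theorem ordinaryHypergeometricCoefficient_eq_div (a b c : K) (k : ℕ) :
    ordinaryHypergeometricCoefficient a b c k =
      (ascPochhammer K k).eval a * (ascPochhammer K k).eval b /
        ((ascPochhammer K k).eval c * k !) := by
  rw [ordinaryHypergeometricCoefficient, div_eq_mul_inv, mul_inv]
  ring

variable [CharZero K]

theorem ordinaryHypergeometricCoefficient_add_mul_choose (a b c : K) (j m : ℕ) :
    ordinaryHypergeometricCoefficient a b c (j + m) * (j + m).choose j =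
      ordinaryHypergeometricCoefficient a b c j *
        ordinaryHypergeometricCoefficient (a + j) (b + j) (c + j) m := by
  have hfac : ((j + m).choose j * j ! * m ! : K) = (j + m)! := by
    rw [add_comm j m, mul_right_comm]
    exact_mod_cast Nat.add_choose_mul_factorial_mul_factorial m j
  have hchoose : ((j + m).choose j : K) ≠ 0 :=
    Nat.cast_ne_zero.mpr (Nat.choose_pos (Nat.le_add_right j m)).ne'
  have hj : (j ! : K) ≠ 0 := Nat.cast_ne_zero.mpr j.factorial_ne_zero
  have hm : (m ! : K) ≠ 0 := Nat.cast_ne_zero.mpr m.factorial_ne_zero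
  simp only [ordinaryHypergeometricCoefficient, ascPochhammer_eval_add, mul_inv, ← hfac]
  field_simp

theorem terminatingHypergeometric_one (M : ℕ) (B C : K) (hC : (ascPochhammer K M).eval C ≠ 0) :
    terminatingHypergeometric M B C 1 =
      (ascPochhammer K M).eval (C - B) / (ascPochhammer K M).eval C := by
  rw [eq_div_iff hC, ascPochhammer_eval_sub_eq_sum, terminatingHypergeometric, sum_mul]
  refine sum_congr rfl fun m hm => ?_
  obtain ⟨r, rfl⟩ := Nat.exists_eq_add_of_le (Nat.lt_succ_iff.mp (mem_range.mp hm))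
  rw [ascPochhammer_eval_add] at hC ⊢
  have hCm : (ascPochhammer K m).eval C ≠ 0 := left_ne_zero_of_mul hC
  have hm : (m ! : K) ≠ 0 := Nat.cast_ne_zero.mpr m.factorial_ne_zero
  rw [ordinaryHypergeometricCoefficient, ascPochhammer_eval_neg_natCast, Nat.add_sub_cancel_left,
    one_pow]
  field_simp

theorem terminatingHypergeometric_one_sub_eq_sum (n : ℕ) (b c z : K) :
    terminatingHypergeometric n b c (1 - z) = ∑ j ∈ range (n + 1),
      (-1) ^ j * ordinaryHypergeometricCoefficient (-n : K) b c j *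
        terminatingHypergeometric (n - j) (b + j) (c + j) 1 * z ^ j := by
  set f : ℕ → ℕ → K := fun k j =>
    ordinaryHypergeometricCoefficient (-n : K) b c k * k.choose j * ((-1) ^ j * z ^ j)
  calc terminatingHypergeometric n b c (1 - z)
      = ∑ k ∈ range (n + 1), ∑ j ∈ range (k + 1), f k j := by
        refine sum_congr rfl fun k _ => ?_
        rw [sub_eq_neg_add, add_pow, mul_sum]
        refine sum_congr rfl fun j _ => ?_
        simp only [f, one_pow, mul_one, neg_pow z]
        ring
    _ = ∑ j ∈ range (n + 1), ∑ k ∈ Ico j (n + 1), f k j := by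
        simp only [range_eq_Ico]
        exact (sum_Ico_Ico_comm 0 (n + 1) fun j k => f k j).symm
    _ = _ := by
        refine sum_congr rfl fun j hj => ?_
        obtain ⟨r, rfl⟩ := Nat.exists_eq_add_of_le (Nat.lt_succ_iff.mp (mem_range.mp hj))
        rw [sum_Ico_eq_sum_range, show j + r + 1 - j = r + 1 by omega, Nat.add_sub_cancel_left,
          terminatingHypergeometric, mul_sum, sum_mul]
        refine sum_congr rfl fun m _ => ?_
        have hshift : (-((j + r : ℕ) : K)) + j = -r := by push_cast; ring
        simp only [f, ← mul_assoc, ordinaryHypergeometricCoefficient_add_mul_choose, hshift]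
        ring

theorem terminatingHypergeometric_one_sub (n : ℕ) (b c z : K)
    (hc : (ascPochhammer K n).eval c ≠ 0) (hd : (ascPochhammer K n).eval (1 + b - c - n) ≠ 0) :
    terminatingHypergeometric n b c (1 - z) =
      (ascPochhammer K n).eval (c - b) / (ascPochhammer K n).eval c *
        terminatingHypergeometric n b (1 + b - c - n) z := by
  rw [terminatingHypergeometric_one_sub_eq_sum, terminatingHypergeometric, mul_sum]
  refine sum_congr rfl fun j hj => ?_
  obtain ⟨r, rfl⟩ := Nat.exists_eq_add_of_le (Nat.lt_succ_iff.mp (mem_range.mp hj))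
  rw [ascPochhammer_eval_add] at hc hd
  have hcj : (ascPochhammer K r).eval (c + j) ≠ 0 := right_ne_zero_of_mul hc
  have hdj : (ascPochhammer K j).eval (1 + b - c - (j + r : ℕ)) ≠ 0 := left_ne_zero_of_mul hd
  have hj : (j ! : K) ≠ 0 := Nat.cast_ne_zero.mpr j.factorial_ne_zero
  have hreflect : (ascPochhammer K j).eval (c - b + r) =
      (-1) ^ j * (ascPochhammer K j).eval (1 + b - c - (j + r : ℕ)) := by
    rw [show 1 + b - c - ((j + r : ℕ) : K) = -(c - b + r + j - 1) by push_cast; ring,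
      ascPochhammer_eval_neg, ← mul_assoc, ← mul_pow, neg_one_mul, neg_neg, one_pow, one_mul]
    ring_nf
  have hcb : (ascPochhammer K (j + r)).eval (c - b) =
      (ascPochhammer K r).eval (c - b) * (ascPochhammer K j).eval (c - b + r) := by
    rw [add_comm j r, ascPochhammer_eval_add]
  rw [Nat.add_sub_cancel_left, terminatingHypergeometric_one r _ _ hcj, add_sub_add_right_eq_sub,
    hcb, hreflect, ascPochhammer_eval_add j r c]
  simp only [ordinaryHypergeometricCoefficient]
  field_simp

end Hypergeometric

theorem terminating_2F1_transformation (N : ℕ) (hN : 1 ≤ N) (z : ℚ) :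
    ∑ k ∈ Finset.range N,
      ((ascPochhammer ℚ k).eval (1 - (N : ℚ)) * (ascPochhammer ℚ k).eval (N : ℚ) /
        ((ascPochhammer ℚ k).eval (2 * (N : ℚ)) * (k.factorial : ℚ))) * (1 - z) ^ k =
    ((ascPochhammer ℚ (N - 1)).eval (N : ℚ) / (ascPochhammer ℚ (N - 1)).eval (2 * (N : ℚ))) *
    ∑ k ∈ Finset.range N,
      ((ascPochhammer ℚ k).eval (1 - (N : ℚ)) * (ascPochhammer ℚ k).eval (N : ℚ) /
        ((ascPochhammer ℚ k).eval (2 - 2 * (N : ℚ)) * (k.factorial : ℚ))) * z ^ k := by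
  obtain ⟨n, rfl⟩ := Nat.exists_eq_add_of_le' hN
  have hc : (ascPochhammer ℚ n).eval (2 * ((n + 1 : ℕ) : ℚ)) ≠ 0 :=
    (ascPochhammer_pos n _ (by positivity)).ne'
  have hd : (ascPochhammer ℚ n).eval (2 - 2 * ((n + 1 : ℕ) : ℚ)) ≠ 0 := by
    rw [show 2 - 2 * ((n + 1 : ℕ) : ℚ) = -((2 * n : ℕ) : ℚ) by push_cast; ring]
    exact ascPochhammer_eval_neg_natCast_ne_zero (by omega)
  have hparam : 2 - 2 * ((n + 1 : ℕ) : ℚ) = 1 + (n + 1 : ℕ) - 2 * (n + 1 : ℕ) - n := by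
    push_cast; ring
  have hcb : 2 * ((n + 1 : ℕ) : ℚ) - (n + 1 : ℕ) = (n + 1 : ℕ) := by ring
  have key := terminatingHypergeometric_one_sub n _ _ z hc (hparam ▸ hd)
  rw [← hparam, hcb] at key
  rw [Nat.add_sub_cancel, show 1 - ((n + 1 : ℕ) : ℚ) = -n by push_cast; ring]
  simpa only [terminatingHypergeometric, ordinaryHypergeometricCoefficient_eq_div] using key
end

section
/- Define h_N = H_N^{(1)}, κ_i' = h_{N-i}'(0)/h_{N-i}(0), κ_i'' = h_{N-i}''(0)/h_{N-i}(0) for the ice-point boundary one-point generating functions h_N(z) = ∑_r H_N^{(r)} z^{r-1} with H_N^{(r)} = C(N+r-2,N-1)C(2N-1-r,N-1)/C(3N-2,N-1). Then for N ≥ 3: κ_0'' - κ_1'' - κ_0' - 2 h_{N-2}/h_{N-1} + 7/2 = 0. -/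
open Finset

/-- The ice-point boundary one-point generating function
`h_N(z) = ∑_{r=1}^N H_N^{(r)} z^{r-1}` as a polynomial over ℚ. -/
noncomputable def hPoly (N : ℕ) : Polynomial ℚ :=
  ∑ r ∈ Finset.Icc 1 N,
    Polynomial.C (((Nat.choose (N + r - 2) (N - 1) : ℚ) *
      (Nat.choose (2 * N - 1 - r) (N - 1) : ℚ)) / (Nat.choose (3 * N - 2) (N - 1) : ℚ)) *
    Polynomial.X ^ (r - 1)

section Helpers
open Polynomial Nat

lemma hPoly_coeff (N k : ℕ) (hk : k < N) :
    (hPoly N).coeff k =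
      ((N + k - 1).choose (N - 1) : ℚ) * ((2 * N - 2 - k).choose (N - 1) : ℚ)
        / ((3 * N - 2).choose (N - 1) : ℚ) := by
  unfold hPoly
  rw [Polynomial.finset_sum_coeff, Finset.sum_eq_single (k + 1)]
  · rw [Polynomial.coeff_C_mul, Polynomial.coeff_X_pow,
      show k + 1 - 1 = k by omega, if_pos rfl,
      show N + (k + 1) - 2 = N + k - 1 by omega,
      show 2 * N - 1 - (k + 1) = 2 * N - 2 - k by omega]
    ring
  · intro b hb hbk
    rw [Polynomial.coeff_C_mul, Polynomial.coeff_X_pow,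
      if_neg (by simp [Finset.mem_Icc] at hb; omega)]
    ring
  · intro h; exfalso; apply h; simp [Finset.mem_Icc]; omega

lemma hPoly_coeff_zero (N k : ℕ) (hk : N ≤ k) : (hPoly N).coeff k = 0 := by
  unfold hPoly
  rw [Polynomial.finset_sum_coeff]
  apply Finset.sum_eq_zero
  intro b hb
  rw [Polynomial.coeff_C_mul, Polynomial.coeff_X_pow,
    if_neg (by simp [Finset.mem_Icc] at hb; omega)]
  ring

lemma eval_deriv (p : Polynomial ℚ) : (Polynomial.derivative p).eval 0 = p.coeff 1 := by
  rw [← Polynomial.coeff_zero_eq_eval_zero, Polynomial.coeff_derivative]; norm_num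

lemma eval_deriv2 (p : Polynomial ℚ) : (Polynomial.derivative^[2] p).eval 0 = 2 * p.coeff 2 := by
  show (Polynomial.derivative (Polynomial.derivative p)).eval 0 = _
  rw [← Polynomial.coeff_zero_eq_eval_zero, Polynomial.coeff_derivative,
    Polynomial.coeff_derivative]
  norm_num; ring

lemma hPoly_eval0 (N : ℕ) (h : 1 ≤ N) :
    (hPoly N).eval 0 = ((2 * N - 2).choose (N - 1) : ℚ) / ((3 * N - 2).choose (N - 1) : ℚ) := by
  rw [← Polynomial.coeff_zero_eq_eval_zero, hPoly_coeff N 0 (by omega),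
    show N + 0 - 1 = N - 1 by omega, Nat.choose_self, show 2 * N - 2 - 0 = 2 * N - 2 by omega]
  ring

lemma fq (m : ℕ) : ((m + 1)! : ℚ) = (m + 1) * (m ! : ℚ) := by
  rw [Nat.factorial_succ]; push_cast; ring

lemma qchoose (a b : ℕ) : (((a + b).choose a : ℕ) : ℚ) = ((a + b)! : ℚ) / ((a ! : ℚ) * (b ! : ℚ)) := by
  have h := Nat.add_choose_mul_factorial_mul_factorial a b
  have ha : ((a ! : ℚ) * (b ! : ℚ)) ≠ 0 := by positivity
  rw [eq_div_iff ha, ← mul_assoc, Nat.choose_symm_add]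
  exact_mod_cast congrArg (Nat.cast : ℕ → ℚ) h

end Helpers

open Polynomial Nat in
set_option maxHeartbeats 1600000 in
theorem second_type_identity_second_derivative (N : ℕ) (hN : 3 ≤ N) :
    (Polynomial.derivative^[2] (hPoly N)).eval 0 / (hPoly N).eval 0
      - (Polynomial.derivative^[2] (hPoly (N - 1))).eval 0 / (hPoly (N - 1)).eval 0
      - (Polynomial.derivative (hPoly N)).eval 0 / (hPoly N).eval 0
      - 2 * ((hPoly (N - 2)).eval 0 / (hPoly (N - 1)).eval 0) + 7 / 2 = 0 := by
  rcases Nat.lt_or_ge N 4 with h4 | h4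
  · -- N = 3
    have h3 : N = 3 := by omega
    subst h3
    rw [show (3:ℕ) - 1 = 2 by norm_num, show (3:ℕ) - 2 = 1 by norm_num]
    rw [eval_deriv2, eval_deriv2, eval_deriv,
      hPoly_coeff 3 2 (by omega), hPoly_coeff_zero 2 2 (by omega),
      hPoly_coeff 3 1 (by omega), hPoly_eval0 3 (by omega), hPoly_eval0 2 (by omega),
      hPoly_eval0 1 (by omega)]
    norm_num [Nat.choose]
  · obtain ⟨n, rfl⟩ : ∃ n, N = n + 4 := ⟨N - 4, by omega⟩
    rw [show n + 4 - 1 = n + 3 by omega, show n + 4 - 2 = n + 2 by omega]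
    have hf1 : ((n+1)! : ℚ) ≠ 0 := by positivity
    have hf2 : ((n+2)! : ℚ) ≠ 0 := by positivity
    have hf3 : ((n+3)! : ℚ) ≠ 0 := by positivity
    have hg0 : ((2*n)! : ℚ) ≠ 0 := by positivity
    have hg3 : ((2*n+3)! : ℚ) ≠ 0 := by positivity
    have hg4 : ((2*n+4)! : ℚ) ≠ 0 := by positivity
    have hg5 : ((2*n+5)! : ℚ) ≠ 0 := by positivity
    have hg2 : ((2*n+2)! : ℚ) ≠ 0 := by positivity
    have hr4 : ((3*n+4)! : ℚ) ≠ 0 := by positivity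
    have K1 : (Polynomial.derivative (hPoly (n+4))).eval 0 / (hPoly (n+4)).eval 0
        = ((n:ℚ)+4)/2 := by
      rw [eval_deriv, hPoly_coeff _ 1 (by omega), hPoly_eval0 _ (by omega),
        show (n+4) + 1 - 1 = n + 4 by omega, show (n+4) - 1 = n+3 by omega,
        show 2*(n+4) - 2 - 1 = 2*n+5 by omega, show 3*(n+4) - 2 = 3*n+10 by omega,
        show 2*(n+4) - 2 = 2*n+6 by omega]
      have c1 : ((2*n+5).choose (n+3) : ℚ) = ((2*n+5)! : ℚ)/((n+3)! * (n+2)!) := by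
        rw [show 2*n+5 = (n+3)+(n+2) by ring, qchoose]
      have c2 : ((2*n+6).choose (n+3) : ℚ) = ((2*n+6)! : ℚ)/((n+3)! * (n+3)!) := by
        rw [show 2*n+6 = (n+3)+(n+3) by ring, qchoose]
      have c3 : (((n+4)).choose (n+3) : ℚ) = ((n:ℚ)+4) := by
        rw [show n+4 = (n+3)+1 by ring, Nat.choose_succ_self_right]; push_cast; ring
      have f6 : ((2*n+6)! : ℚ) = (2*(n:ℚ)+6) * ((2*n+5)! : ℚ) := by
        rw [show 2*n+6 = (2*n+5)+1 by ring, fq]; push_cast; ring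
      have f3 : ((n+3)! : ℚ) = ((n:ℚ)+3) * ((n+2)! : ℚ) := by
        rw [show n+3 = (n+2)+1 by ring, fq]; push_cast; ring
      have hT : ((3*n+10).choose (n+3) : ℚ) ≠ 0 := by
        have := Nat.choose_pos (show n+3 ≤ 3*n+10 by omega); positivity
      have h3 : ((n:ℚ)+3) ≠ 0 := by positivity
      rw [c1, c2, c3, f6, f3]
      field_simp
      ring
    have K2 : (Polynomial.derivative^[2] (hPoly (n+4))).eval 0 / (hPoly (n+4)).eval 0
        = ((n:ℚ)+4)*((n:ℚ)+5)*((n:ℚ)+2)/(2*(2*(n:ℚ)+5)) := by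
      rw [eval_deriv2, hPoly_coeff _ 2 (by omega), hPoly_eval0 _ (by omega),
        show (n+4) + 2 - 1 = n + 5 by omega, show (n+4) - 1 = n+3 by omega,
        show 2*(n+4) - 2 - 2 = 2*n+4 by omega, show 3*(n+4) - 2 = 3*n+10 by omega,
        show 2*(n+4) - 2 = 2*n+6 by omega]
      have c1 : ((n+5).choose (n+3) : ℚ) = ((n+5)! : ℚ)/((n+3)! * (2)!) := by
        rw [show n+5 = (n+3)+2 by ring, qchoose]
      have c2 : ((2*n+4).choose (n+3) : ℚ) = ((2*n+4)! : ℚ)/((n+3)! * (n+1)!) := by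
        rw [show 2*n+4 = (n+3)+(n+1) by ring, qchoose]
      have c3 : ((2*n+6).choose (n+3) : ℚ) = ((2*n+6)! : ℚ)/((n+3)! * (n+3)!) := by
        rw [show 2*n+6 = (n+3)+(n+3) by ring, qchoose]
      have f5 : ((n+5)! : ℚ) = ((n:ℚ)+5) * ((n:ℚ)+4) * ((n+3)! : ℚ) := by
        rw [show n+5 = (n+4)+1 by ring, fq, show n+4 = (n+3)+1 by ring, fq]; push_cast; ring
      have f6 : ((2*n+6)! : ℚ) = (2*(n:ℚ)+6) * (2*(n:ℚ)+5) * ((2*n+4)! : ℚ) := by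
        rw [show 2*n+6 = (2*n+5)+1 by ring, fq, show 2*n+5 = (2*n+4)+1 by ring, fq]
        push_cast; ring
      have f3 : ((n+3)! : ℚ) = ((n:ℚ)+3) * ((n:ℚ)+2) * ((n+1)! : ℚ) := by
        rw [show n+3 = (n+2)+1 by ring, fq, show n+2 = (n+1)+1 by ring, fq]; push_cast; ring
      have hT : ((3*n+10).choose (n+3) : ℚ) ≠ 0 := by
        have := Nat.choose_pos (show n+3 ≤ 3*n+10 by omega); positivity
      have h3 : ((n:ℚ)+3) ≠ 0 := by positivity
      have h2 : ((n:ℚ)+2) ≠ 0 := by positivity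
      have h25 : (2*(n:ℚ)+5) ≠ 0 := by positivity
      have h26 : (2*(n:ℚ)+6) ≠ 0 := by positivity
      rw [c1, c2, c3, f5, f6, f3, Nat.factorial_two]
      field_simp
      ring
    have K3 : (Polynomial.derivative^[2] (hPoly (n+3))).eval 0 / (hPoly (n+3)).eval 0
        = ((n:ℚ)+3)*((n:ℚ)+4)*((n:ℚ)+1)/(2*(2*(n:ℚ)+3)) := by
      rw [eval_deriv2, hPoly_coeff _ 2 (by omega), hPoly_eval0 _ (by omega),
        show (n+3) + 2 - 1 = n + 4 by omega, show (n+3) - 1 = n+2 by omega,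
        show 2*(n+3) - 2 - 2 = 2*n+2 by omega, show 3*(n+3) - 2 = 3*n+7 by omega,
        show 2*(n+3) - 2 = 2*n+4 by omega]
      have c1 : ((n+4).choose (n+2) : ℚ) = ((n+4)! : ℚ)/((n+2)! * (2)!) := by
        rw [show n+4 = (n+2)+2 by ring, qchoose]
      have c2 : ((2*n+2).choose (n+2) : ℚ) = ((2*n+2)! : ℚ)/((n+2)! * (n)!) := by
        rw [show 2*n+2 = (n+2)+n by ring, qchoose]
      have c3 : ((2*n+4).choose (n+2) : ℚ) = ((2*n+4)! : ℚ)/((n+2)! * (n+2)!) := by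
        rw [show 2*n+4 = (n+2)+(n+2) by ring, qchoose]
      have f4 : ((n+4)! : ℚ) = ((n:ℚ)+4) * ((n:ℚ)+3) * ((n+2)! : ℚ) := by
        rw [show n+4 = (n+3)+1 by ring, fq, show n+3 = (n+2)+1 by ring, fq]; push_cast; ring
      have f6 : ((2*n+4)! : ℚ) = (2*(n:ℚ)+4) * (2*(n:ℚ)+3) * ((2*n+2)! : ℚ) := by
        rw [show 2*n+4 = (2*n+3)+1 by ring, fq, show 2*n+3 = (2*n+2)+1 by ring, fq]
        push_cast; ring
      have f2 : ((n+2)! : ℚ) = ((n:ℚ)+2) * ((n:ℚ)+1) * ((n)! : ℚ) := by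
        rw [show n+2 = (n+1)+1 by ring, fq, show n+1 = n+1 by ring, fq]; push_cast; ring
      have hT : ((3*n+7).choose (n+2) : ℚ) ≠ 0 := by
        have := Nat.choose_pos (show n+2 ≤ 3*n+7 by omega); positivity
      have h3 : ((n:ℚ)+2) ≠ 0 := by positivity
      have h2 : ((n:ℚ)+1) ≠ 0 := by positivity
      have h25 : (2*(n:ℚ)+3) ≠ 0 := by positivity
      have h26 : (2*(n:ℚ)+4) ≠ 0 := by positivity
      have hn : ((n)! : ℚ) ≠ 0 := by positivity
      rw [c1, c2, c3, f4, f6, f2, Nat.factorial_two]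
      field_simp
      ring
    have K4 : (hPoly (n+2)).eval 0 / (hPoly (n+3)).eval 0
        = 3*(3*(n:ℚ)+7)*(3*(n:ℚ)+5)/(4*(2*(n:ℚ)+3)*(2*(n:ℚ)+5)) := by
      rw [hPoly_eval0 (n+2) (by omega), hPoly_eval0 (n+3) (by omega),
        show (n+2) - 1 = n+1 by omega, show 2*(n+2) - 2 = 2*n+2 by omega,
        show 3*(n+2) - 2 = 3*n+4 by omega,
        show (n+3) - 1 = n+2 by omega, show 2*(n+3) - 2 = 2*n+4 by omega,
        show 3*(n+3) - 2 = 3*n+7 by omega]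
      have c1 : ((2*n+2).choose (n+1) : ℚ) = ((2*n+2)! : ℚ)/((n+1)! * (n+1)!) := by
        rw [show 2*n+2 = (n+1)+(n+1) by ring, qchoose]
      have c2 : ((3*n+4).choose (n+1) : ℚ) = ((3*n+4)! : ℚ)/((n+1)! * (2*n+3)!) := by
        rw [show 3*n+4 = (n+1)+(2*n+3) by ring, qchoose]
      have c3 : ((2*n+4).choose (n+2) : ℚ) = ((2*n+4)! : ℚ)/((n+2)! * (n+2)!) := by
        rw [show 2*n+4 = (n+2)+(n+2) by ring, qchoose]
      have c4 : ((3*n+7).choose (n+2) : ℚ) = ((3*n+7)! : ℚ)/((n+2)! * (2*n+5)!) := by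
        rw [show 3*n+7 = (n+2)+(2*n+5) by ring, qchoose]
      have f1 : ((2*n+4)! : ℚ) = (2*(n:ℚ)+4) * (2*(n:ℚ)+3) * ((2*n+2)! : ℚ) := by
        rw [show 2*n+4 = (2*n+3)+1 by ring, fq, show 2*n+3 = (2*n+2)+1 by ring, fq]
        push_cast; ring
      have f2 : ((3*n+7)! : ℚ) = (3*(n:ℚ)+7) * (3*(n:ℚ)+6) * (3*(n:ℚ)+5) * ((3*n+4)! : ℚ) := by
        rw [show 3*n+7 = (3*n+6)+1 by ring, fq, show 3*n+6 = (3*n+5)+1 by ring, fq,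
          show 3*n+5 = (3*n+4)+1 by ring, fq]
        push_cast; ring
      have f3 : ((n+2)! : ℚ) = ((n:ℚ)+2) * ((n+1)! : ℚ) := by
        rw [show n+2 = (n+1)+1 by ring, fq]; push_cast; ring
      have f4 : ((2*n+5)! : ℚ) = (2*(n:ℚ)+5) * (2*(n:ℚ)+4) * ((2*n+3)! : ℚ) := by
        rw [show 2*n+5 = (2*n+4)+1 by ring, fq, show 2*n+4 = (2*n+3)+1 by ring, fq]
        push_cast; ring
      have h1 : ((n:ℚ)+2) ≠ 0 := by positivity
      have h2 : (2*(n:ℚ)+3) ≠ 0 := by positivity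
      have h3 : (2*(n:ℚ)+4) ≠ 0 := by positivity
      have h4 : (2*(n:ℚ)+5) ≠ 0 := by positivity
      have h5 : (3*(n:ℚ)+7) ≠ 0 := by positivity
      have h6 : (3*(n:ℚ)+6) ≠ 0 := by positivity
      have h7 : (3*(n:ℚ)+5) ≠ 0 := by positivity
      rw [c1, c2, c3, c4, f1, f2, f3, f4]
      field_simp
      ring
    rw [K1, K2, K3, K4]
    have h2 : (2*(n:ℚ)+3) ≠ 0 := by positivity
    have h4 : (2*(n:ℚ)+5) ≠ 0 := by positivity
    field_simp
    ring
end

section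
/- Let t_0(z) = (2 - z - √(1-z+z²)) / (3(1-z)) and f(t) = log(t(1-t)(1-(1-z)t)) for fixed real z ∈ [0,1). Then t_0(z) ∈ (0,1), f'(t_0(z)) = 0, and f''(t_0(z)) = -2[2(1-z+z²)² - (2-z)(1-2z)(1+z)√(1-z+z²)]/z² < 0 for z ∈ (0,1). -/
/-!
Write `P t = t (1 - t) (1 - (1 - z) t)`, so that `f = log ∘ P` and `f' = P' / P`. The point `t₀` is
the smaller root of the quadratic `P'`, hence `f'(t₀) = 0` and `f''(t₀) = P''(t₀) / P(t₀)`, where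
`P''(t₀) = -2 √(1 - z + z²) < 0` and `P(t₀) > 0`. The closed form comes from rationalising `1 / P(t₀)`:
the three linear factors of `P(t₀)`, multiplied by their conjugates, give exactly `z²`.
-/

open Real Filter Topology Set

theorem deriv_deriv_log_comp_of_deriv_eq_zero {P P' : ℝ → ℝ} {x p'' : ℝ}
    (hP : ∀ᶠ t in 𝓝 x, HasDerivAt P (P' t) t) (hP' : HasDerivAt P' p'' x)
    (hcrit : P' x = 0) (hx : P x ≠ 0) :
    deriv (deriv fun t => log (P t)) x = p'' / P x := by
  have hne : ∀ᶠ t in 𝓝 x, P t ≠ 0 := hP.self_of_nhds.continuousAt.eventually_ne hx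
  have hlog : deriv (fun t => log (P t)) =ᶠ[𝓝 x] fun t => P' t / P t := by
    filter_upwards [hP, hne] with t ht htne using (ht.log htne).deriv
  rw [hlog.deriv_eq, (hP'.fun_div hP.self_of_nhds hx).deriv, hcrit]
  field_simp
  ring

theorem hasDerivAt_cubic (z t : ℝ) :
    HasDerivAt (fun t => t * (1 - t) * (1 - (1 - z) * t))
      (3 * (1 - z) * t ^ 2 - 2 * (2 - z) * t + 1) t := by
  have h := ((hasDerivAt_id' t).fun_mul ((hasDerivAt_const t 1).fun_sub (hasDerivAt_id' t))).fun_mul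
    ((hasDerivAt_const t 1).fun_sub ((hasDerivAt_id' t).const_mul (1 - z)))
  exact h.congr_deriv (by ring)

theorem hasDerivAt_quadratic (z t : ℝ) :
    HasDerivAt (fun t => 3 * (1 - z) * t ^ 2 - 2 * (2 - z) * t + 1)
      (6 * (1 - z) * t - 2 * (2 - z)) t := by
  have h := (((hasDerivAt_pow 2 t).const_mul (3 * (1 - z))).fun_sub
    ((hasDerivAt_id' t).const_mul (2 * (2 - z)))).add_const 1
  exact h.congr_deriv (by simp only [Nat.cast_ofNat]; ring)

theorem cubic_pos {a t : ℝ} (ha : a ≤ 1) (ht : t ∈ Ioo 0 1) :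
    0 < t * (1 - t) * (1 - a * t) := by
  obtain ⟨ht0, ht1⟩ := ht
  have : a * t < 1 := by nlinarith
  have : 0 < 1 - t := by linarith
  positivity

section CriticalPoint

variable {z s t : ℝ}

theorem critical_point_mem_Ioo (hz : z < 1) (hs0 : 0 < s) (hs : s ^ 2 = 1 - z + z ^ 2)
    (ht : t = (2 - z - s) / (3 * (1 - z))) : t ∈ Ioo 0 1 := by
  have hsu : s < 2 - z := by nlinarith
  have hsv : 2 * z - 1 < s := by nlinarith
  subst ht
  constructor
  · exact div_pos (by linarith) (by linarith)
  · exact (div_lt_one (by linarith)).2 (by linarith)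

theorem quadratic_critical_point_eq_zero (hz : z ≠ 1) (hs : s ^ 2 = 1 - z + z ^ 2)
    (ht : t = (2 - z - s) / (3 * (1 - z))) : 3 * (1 - z) * t ^ 2 - 2 * (2 - z) * t + 1 = 0 := by
  have : 1 - z ≠ 0 := sub_ne_zero.2 hz.symm
  subst ht
  field_simp
  linear_combination hs

theorem quadratic_deriv_critical_point (hz : z ≠ 1) (ht : t = (2 - z - s) / (3 * (1 - z))) :
    6 * (1 - z) * t - 2 * (2 - z) = -2 * s := by
  have : 1 - z ≠ 0 := sub_ne_zero.2 hz.symm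
  subst ht
  field_simp
  ring

theorem cubic_critical_point_mul_conj_factors (hz : z ≠ 1) (hs : s ^ 2 = 1 - z + z ^ 2)
    (ht : t = (2 - z - s) / (3 * (1 - z))) :
    t * (1 - t) * (1 - (1 - z) * t) * ((2 - z + s) * (s - 1 + 2 * z) * (1 + z - s)) = z ^ 2 := by
  have : 1 - z ≠ 0 := sub_ne_zero.2 hz.symm
  have hu : (2 - z - s) * (2 - z + s) = 3 * (1 - z) := by linear_combination -hs
  have hv : (1 - 2 * z + s) * (s - 1 + 2 * z) = 3 * z * (1 - z) := by linear_combination hs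
  have hw : (1 + z + s) * (1 + z - s) = 3 * z := by linear_combination -hs
  subst ht
  calc _ = (2 - z - s) * (2 - z + s) * ((1 - 2 * z + s) * (s - 1 + 2 * z))
          * ((1 + z + s) * (1 + z - s)) / (27 * (1 - z) ^ 2) := by
        field_simp; ring
    _ = z ^ 2 := by rw [hu, hv, hw]; field_simp; ring

theorem mul_conj_factors_eq (hs : s ^ 2 = 1 - z + z ^ 2) :
    s * ((2 - z + s) * (s - 1 + 2 * z) * (1 + z - s)) =
      2 * (1 - z + z ^ 2) ^ 2 - (2 - z) * (1 - 2 * z) * (1 + z) * s := by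
  linear_combination (2 * (1 - z + z ^ 2) - s ^ 2) * hs

end CriticalPoint

theorem saddle_point_of_f (z : ℝ) (hz : z ∈ Set.Ico (0 : ℝ) 1) :
    ((2 - z - Real.sqrt (1 - z + z ^ 2)) / (3 * (1 - z)) ∈ Set.Ioo (0 : ℝ) 1 ∧
      deriv (fun t : ℝ => Real.log (t * (1 - t) * (1 - (1 - z) * t)))
        ((2 - z - Real.sqrt (1 - z + z ^ 2)) / (3 * (1 - z))) = 0) ∧
    (z ∈ Set.Ioo (0 : ℝ) 1 →
      deriv (deriv (fun t : ℝ => Real.log (t * (1 - t) * (1 - (1 - z) * t))))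
        ((2 - z - Real.sqrt (1 - z + z ^ 2)) / (3 * (1 - z))) =
        -2 * (2 * (1 - z + z ^ 2) ^ 2 -
          (2 - z) * (1 - 2 * z) * (1 + z) * Real.sqrt (1 - z + z ^ 2)) / z ^ 2 ∧
      deriv (deriv (fun t : ℝ => Real.log (t * (1 - t) * (1 - (1 - z) * t))))
        ((2 - z - Real.sqrt (1 - z + z ^ 2)) / (3 * (1 - z))) < 0) := by
  obtain ⟨hz0, hz1⟩ := hz
  have hS : 0 < 1 - z + z ^ 2 := by nlinarith
  set s := √(1 - z + z ^ 2)
  have hs0 : 0 < s := sqrt_pos.2 hS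
  have hs : s ^ 2 = 1 - z + z ^ 2 := sq_sqrt hS.le
  set t₀ := (2 - z - s) / (3 * (1 - z)) with ht₀_def
  have ht₀ : t₀ ∈ Ioo 0 1 := critical_point_mem_Ioo hz1 hs0 hs ht₀_def
  have hP : 0 < t₀ * (1 - t₀) * (1 - (1 - z) * t₀) := cubic_pos (by linarith) ht₀
  have hQ := quadratic_critical_point_eq_zero hz1.ne hs ht₀_def
  refine ⟨⟨ht₀, ?_⟩, fun ⟨hz0', _⟩ => ?_⟩
  · rw [((hasDerivAt_cubic z t₀).log hP.ne').deriv, hQ, zero_div]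
  have hf'' : deriv (deriv fun t => log (t * (1 - t) * (1 - (1 - z) * t))) t₀
      = -2 * s / (t₀ * (1 - t₀) * (1 - (1 - z) * t₀)) := by
    rw [deriv_deriv_log_comp_of_deriv_eq_zero (.of_forall (hasDerivAt_cubic z))
      (hasDerivAt_quadratic z t₀) hQ hP.ne', quadratic_deriv_critical_point hz1.ne ht₀_def]
  refine ⟨?_, hf'' ▸ div_neg_of_neg_of_pos (by linarith) hP⟩
  have hPD := cubic_critical_point_mul_conj_factors hz1.ne hs ht₀_def
  have hD := right_ne_zero_of_mul (hPD.trans_ne (pow_ne_zero 2 hz0'.ne'))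
  calc _ = -2 * s / (t₀ * (1 - t₀) * (1 - (1 - z) * t₀)) := hf''
    _ = -2 * (s * ((2 - z + s) * (s - 1 + 2 * z) * (1 + z - s))) / z ^ 2 := by
      rw [← hPD, ← mul_assoc, mul_div_mul_right _ _ hD]
    _ = _ := by rw [mul_conj_factors_eq hs]
end
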